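/- arXiv:1405.0079 — 3 statements merged into one kernel-verified Lean document; each statement's English description precedes it below -/
import Mathlib

section
/- Let n ≥ 2 and let d_1 ≤ d_2 ≤ … ≤ d_{k+2} be integers with 1 ≤ d_i for all i and 2·d_{k+2} ≤ n. Then either Σ_{i=1}^{k+2} d_i(n−d_i) > n²−1 (i.e., the dimension vector (d_1, …, d_{k+2}; n) is trivially sparse), or Σ_{i=1}^{k} d_i < n. -/
noncomputable section

/-- Complex `n × d` matrices of rank `d`, with the subspace topology of the
Euclidean (product) topology on matrices. -/
def FullRankMatrices (n d : ℕ) : Type :=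
  {A : Matrix (Fin n) (Fin d) ℂ // A.rank = d}

instance (n d : ℕ) : TopologicalSpace (FullRankMatrices n d) :=
  instTopologicalSpaceSubtype

/-- The Grassmannian `Gr(d; n)` of `d`-dimensional linear subspaces of `ℂ^n`. -/
def Gr (d n : ℕ) : Type :=
  {U : Submodule ℂ (Fin n → ℂ) // Module.finrank ℂ U = d}

/-- The map sending a rank-`d` matrix to its column span. -/
def colSpan (n d : ℕ) : FullRankMatrices n d → Gr d n :=
  fun A => ⟨LinearMap.range A.1.mulVecLin, A.2⟩

/-- `Gr(d; n)` carries the quotient topology induced by the column-span map. -/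
instance (d n : ℕ) : TopologicalSpace (Gr d n) :=
  TopologicalSpace.coinduced (colSpan n d) inferInstance

/-- The linear automorphism of `ℂ^n` associated to an element of `GL(n, ℂ)`. -/
def glEquiv {n : ℕ} (M : GL (Fin n) ℂ) : (Fin n → ℂ) ≃ₗ[ℂ] (Fin n → ℂ) :=
  LinearMap.GeneralLinearGroup.generalLinearEquiv ℂ (Fin n → ℂ)
    (Matrix.GeneralLinearGroup.toLin M)

/-- The action of `GL(n, ℂ)` on the Grassmannian, `M • U = M(U)`. -/
def glAction {n d : ℕ} (M : GL (Fin n) ℂ) (U : Gr d n) : Gr d n :=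
  ⟨U.1.map (glEquiv M).toLinearMap, by
    rw [LinearEquiv.finrank_map_eq]; exact U.2⟩

/-- A dimension vector, recorded as the list `[d_1, …, d_k]` of subspace dimensions
together with the ambient dimension `n`, is dense if some point of
`∏ᵢ Gr(dᵢ; n)` has dense orbit under the diagonal `GL(n, ℂ)`-action. -/
def DenseDV (d : List ℕ) (n : ℕ) : Prop :=
  ∃ x : ∀ i : Fin d.length, Gr (d.get i) n,
    Dense {y : ∀ i : Fin d.length, Gr (d.get i) n |
      ∃ M : GL (Fin n) ℂ, (fun i => glAction M (x i)) = y}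

end

lemma aux_mono (n m e : ℕ) (hme : m ≤ e) (hen : 2 * e ≤ n) :
    m * (n - m) ≤ e * (n - e) := by
  zify [show m ≤ n by omega, show e ≤ n by omega]
  nlinarith

lemma sum_split (k : ℕ) (h : k ≤ k + 2) (f : Fin (k+2) → ℕ) : ∑ i, f i =
    (∑ i : Fin k, f (Fin.castLE h i)) + f ⟨k, by omega⟩ + f ⟨k+1, by omega⟩ := by
  rw [Fin.sum_univ_add (f := f), Fin.sum_univ_two]
  have h1 : ∀ i : Fin k, f (Fin.castAdd 2 i) = f (Fin.castLE h i) := fun i => rfl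
  have h2 : f (Fin.natAdd k 0) = f ⟨k, by omega⟩ := rfl
  have h3 : f (Fin.natAdd k 1) = f ⟨k+1, by omega⟩ := rfl
  rw [Finset.sum_congr rfl (fun i _ => h1 i), h2, h3, ← add_assoc]

/-- the numerical lemma. -/
theorem numerical_lemma (n k : ℕ) (hn : 2 ≤ n) (d : Fin (k + 2) → ℕ)
    (hmono : Monotone d) (hpos : ∀ i, 1 ≤ d i)
    (hhalf : 2 * d (Fin.last (k + 1)) ≤ n) :
    (∑ i, d i * (n - d i) > n ^ 2 - 1) ∨
      (∑ i : Fin k, d (Fin.castLE (by omega) i) < n) := by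
  by_cases hk : ∑ i : Fin k, d (Fin.castLE (by omega) i) < n
  · exact Or.inr hk
  left
  push_neg at hk
  have hk0 : k ≠ 0 := by
    rintro rfl
    simp at hk
    omega
  have hkk : k ≤ k + 2 := by omega
  obtain ⟨m, hm⟩ : ∃ m, d ⟨k - 1, by omega⟩ = m := ⟨_, rfl⟩
  have hub : ∀ i : Fin (k+2), 2 * d i ≤ n := fun i =>
    le_trans (by have := hmono (Fin.le_last i); omega) hhalf
  have hm1 : 1 ≤ m := hm ▸ hpos _
  have h2m : 2 * m ≤ n := hm ▸ hub _
  -- bound on the first k terms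
  have hdle : ∀ i : Fin k, d (Fin.castLE hkk i) ≤ m := by
    intro i
    rw [← hm]
    refine hmono ?_
    rw [Fin.le_def, Fin.coe_castLE]
    have := i.isLt; simp; omega
  have hterm : ∀ i : Fin k,
      d (Fin.castLE hkk i) * (n - m) ≤
        d (Fin.castLE hkk i) * (n - d (Fin.castLE hkk i)) := by
    intro i
    exact Nat.mul_le_mul_left _ (Nat.sub_le_sub_left (hdle i) n)
  have hA : n * (n - m) ≤ ∑ i : Fin k,
      d (Fin.castLE hkk i) * (n - d (Fin.castLE hkk i)) := by
    calc n * (n - m) ≤ (∑ i : Fin k, d (Fin.castLE hkk i)) * (n - m) :=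
          Nat.mul_le_mul_right _ hk
      _ = ∑ i : Fin k, d (Fin.castLE hkk i) * (n - m) := by
          rw [Finset.sum_mul]
      _ ≤ _ := Finset.sum_le_sum fun i _ => hterm i
  -- last two terms
  have hb : m * (n - m) ≤ d ⟨k, by omega⟩ * (n - d ⟨k, by omega⟩) :=
    hm ▸ aux_mono n _ _ (hmono (Fin.mk_le_mk.mpr (by omega))) (hub _)
  have hc : m * (n - m) ≤ d ⟨k+1, by omega⟩ * (n - d ⟨k+1, by omega⟩) :=
    hm ▸ aux_mono n _ _ (hmono (Fin.mk_le_mk.mpr (by omega))) (hub _)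
  -- split the sum
  have hsplit := sum_split k hkk fun i => d i * (n - d i)
  rw [hsplit]
  have key : n * (n - m) + m * (n - m) + m * (n - m) > n ^ 2 - 1 := by
    zify [show m ≤ n by omega, show (1:ℕ) ≤ n ^ 2 by nlinarith]
    nlinarith
  omega
end

section
/- Let 𝐝 = (a_{11}, …, a_{1s_1}, a_{21}, …, a_{2s_2}, …, a_{r1}, …, a_{rs_r}; n) be a dimension vector whose entries are partitioned into r nonempty groups, such that Σ_{j=1}^{s_i} a_{ij} ≤ n for every 1 ≤ i ≤ r. If the dimension vector (Σ_{j=1}^{s_1} a_{1j}, …, Σ_{j=1}^{s_r} a_{rj}; n) is sparse, then 𝐝 is sparse. -/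
/-!
Sending a tuple of subspaces to the sums of its groups is `GL(n, ℂ)`-equivariant. On the open
invariant set of tuples whose subspaces are independent within each group, it is a continuous
surjection onto the coarse product of Grassmannians. All three properties are read off on
matrices: `colSpan` is an open quotient map (its fibres are the orbits of right multiplication
by `GL(d, ℂ)`), and the span of a group is the column span of the juxtaposed matrices. A dense
orbit in the fine product meets the open set, hence lies in it, and its image is a dense orbit in
the coarse product.
-/

open Matrix Set Function Topology
open scoped ComplexOrder

theorem exists_denseRange_of_surjective_of_isOpen {G X Y : Type*} [TopologicalSpace X]
    [TopologicalSpace Y] [Nonempty Y] {α : G → X → X} {β : G → Y → Y} {U : Set X}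
    (hU : IsOpen U) (hαU : ∀ g x, α g x ∈ U ↔ x ∈ U) (Φ : U → Y) (hΦ : Continuous Φ)
    (hΦs : Surjective Φ) (hΦα : ∀ g (x : U), Φ ⟨α g x, (hαU g x).2 x.2⟩ = β g (Φ x))
    {x : X} (hx : DenseRange fun g => α g x) : ∃ y, DenseRange fun g => β g y := by
  obtain ⟨u, -⟩ := hΦs (Classical.arbitrary Y)
  obtain ⟨g, hg⟩ := hx.exists_mem_open hU ⟨u, u.2⟩
  have hxU : x ∈ U := (hαU g x).1 hg
  refine ⟨Φ ⟨x, hxU⟩, ?_⟩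
  have horbit : DenseRange fun g => (⟨α g x, (hαU g x).2 hxU⟩ : U) := by
    have hrange : range (fun g => (⟨α g x, (hαU g x).2 hxU⟩ : U)) =
        Subtype.val ⁻¹' range fun g => α g x := by
      ext z
      simp [Subtype.ext_iff]
    rw [DenseRange, hrange]
    exact hx.preimage hU.isOpenMap_subtype_val
  have horbit_eq : (fun g => β g (Φ ⟨x, hxU⟩)) = Φ ∘ fun g => ⟨α g x, (hαU g x).2 hxU⟩ :=
    funext fun g => (hΦα g ⟨x, hxU⟩).symm
  rw [horbit_eq]
  exact hΦs.denseRange.comp horbit hΦ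

namespace Matrix

variable {K m n : Type*} [Field K] [Fintype n]

theorem rank_eq_card_iff_linearIndependent_col (A : Matrix m n K) :
    A.rank = Fintype.card n ↔ LinearIndependent K A.col := by
  rw [rank_eq_finrank_span_cols, linearIndependent_iff_card_eq_finrank_span, Set.finrank,
    eq_comm]

theorem rank_eq_card_iff_det_ne_zero [DecidableEq n] (A : Matrix n n K) :
    A.rank = Fintype.card n ↔ A.det ≠ 0 := by
  rw [rank_eq_card_iff_linearIndependent_col, linearIndependent_cols_iff_isUnit,
    isUnit_iff_isUnit_det, isUnit_iff_ne_zero]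

theorem isOpen_setOf_rank_eq_card [Fintype m] :
    IsOpen {A : Matrix m n ℂ | A.rank = Fintype.card n} := by
  classical
  -- full column rank means that the Gram matrix `Aᴴ * A` is invertible
  have : {A : Matrix m n ℂ | A.rank = Fintype.card n} = (fun A => (Aᴴ * A).det) ⁻¹' {0}ᶜ := by
    ext A
    simp [← rank_conjTranspose_mul_self A, rank_eq_card_iff_det_ne_zero]
  rw [this]
  exact isOpen_compl_singleton.preimage (by fun_prop)

section Concat

variable {R l : Type*} {r : ℕ} {b : Fin r → ℕ}

def concatCols (A : ∀ j, Matrix l (Fin (b j)) R) : Matrix l (Fin (∑ j, b j)) R :=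
  (of fun x (p : Σ j, Fin (b j)) => A p.1 x p.2).submatrix id finSigmaFinEquiv.symm

def colBlock (C : Matrix l (Fin (∑ j, b j)) R) (j : Fin r) : Matrix l (Fin (b j)) R :=
  C.submatrix id fun k => finSigmaFinEquiv ⟨j, k⟩

theorem concatCols_colBlock (C : Matrix l (Fin (∑ j, b j)) R) :
    concatCols (colBlock C) = C := by
  ext x k
  simp [concatCols, colBlock]

theorem continuous_concatCols [TopologicalSpace R] :
    Continuous (concatCols : (∀ j, Matrix l (Fin (b j)) R) → _) :=
  continuous_matrix fun x k => by simp only [concatCols, submatrix_apply, of_apply]; fun_prop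

theorem range_mulVecLin_concatCols [CommSemiring R] (A : ∀ j, Matrix l (Fin (b j)) R) :
    LinearMap.range (concatCols A).mulVecLin = ⨆ j, LinearMap.range (A j).mulVecLin := by
  simp only [range_mulVecLin]
  have hcols : range (concatCols A).col = ⋃ j, range (A j).col := by
    calc range (concatCols A).col
        = range ((fun p : Σ j, Fin (b j) => (A p.1).col p.2) ∘ finSigmaFinEquiv.symm) := rfl
      _ = range fun p : Σ j, Fin (b j) => (A p.1).col p.2 :=
        finSigmaFinEquiv.symm.surjective.range_comp _
      _ = ⋃ j, range (A j).col := range_sigma_eq_iUnion_range _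
  rw [hcols, Submodule.span_iUnion]

theorem rank_colBlock [Field R] {C : Matrix l (Fin (∑ j, b j)) R} (hC : C.rank = ∑ j, b j)
    (j : Fin r) : (colBlock C j).rank = b j := by
  have hli := (rank_eq_card_iff_linearIndependent_col C).1 (by simpa using hC)
  simpa using (rank_eq_card_iff_linearIndependent_col (colBlock C j)).2
    (hli.comp _ fun k k' h => by simpa using finSigmaFinEquiv.injective h)

end Concat

end Matrix

namespace FullRankMatrices

variable {n d : ℕ}

theorem injective_mulVec (A : FullRankMatrices n d) : Injective A.1.mulVec := by
  rw [mulVec_injective_iff, ← rank_eq_card_iff_linearIndependent_col, Fintype.card_fin]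
  exact A.2

def mulRight (g : GL (Fin d) ℂ) (A : FullRankMatrices n d) : FullRankMatrices n d :=
  ⟨A.1 * g.1, by rw [rank_mul_eq_left_of_isUnit_det _ _ (g.isUnit.map detMonoidHom)]; exact A.2⟩

theorem continuous_mulRight (g : GL (Fin d) ℂ) : Continuous (mulRight (n := n) g) :=
  (continuous_subtype_val.matrix_mul continuous_const).subtype_mk _

theorem colSpan_mulRight (g : GL (Fin d) ℂ) (A : FullRankMatrices n d) :
    colSpan n d (mulRight g A) = colSpan n d A := by
  refine Subtype.ext ?_
  change LinearMap.range (A.1 * g.1).mulVecLin = LinearMap.range A.1.mulVecLin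
  rw [mulVecLin_mul]
  exact LinearMap.range_comp_of_range_eq_top _
    (LinearMap.range_eq_top.2 (mulVec_surjective_iff_isUnit.2 g.isUnit))

theorem exists_mulRight_eq_of_colSpan_eq {A B : FullRankMatrices n d}
    (h : colSpan n d A = colSpan n d B) : ∃ g : GL (Fin d) ℂ, mulRight g A = B := by
  have hcol : ∀ k, ∃ v, A.1 *ᵥ v = B.1.col k := fun k => by
    change B.1.col k ∈ (colSpan n d A).1
    rw [h]
    exact ⟨Pi.single k 1, mulVec_single_one B.1 k⟩
  choose v hv using hcol
  have hAG : A.1 * (of v)ᵀ = B.1 := by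
    ext x k
    simpa [mul_apply, mulVec, dotProduct] using congrFun (hv k) x
  have hG : IsUnit (of v)ᵀ := by
    refine mulVec_injective_iff_isUnit.1 fun u w huw => B.injective_mulVec ?_
    simp only [← hAG, ← mulVec_mulVec, huw]
  exact ⟨hG.unit, Subtype.ext hAG⟩

theorem isOpenMap_colSpan : IsOpenMap (colSpan n d) := by
  intro O hO
  have hsat : colSpan n d ⁻¹' (colSpan n d '' O) = ⋃ g : GL (Fin d) ℂ, mulRight g ⁻¹' O := by
    ext B
    simp only [mem_preimage, mem_image, mem_iUnion]
    constructor
    · rintro ⟨A, hA, hAB⟩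
      obtain ⟨g, hg⟩ := exists_mulRight_eq_of_colSpan_eq hAB.symm
      exact ⟨g, hg ▸ hA⟩
    · rintro ⟨g, hg⟩
      exact ⟨_, hg, colSpan_mulRight g B⟩
  rw [isOpen_coinduced, hsat]
  exact isOpen_iUnion fun g => hO.preimage (continuous_mulRight g)

theorem surjective_colSpan : Surjective (colSpan n d) := by
  rintro ⟨U, hU⟩
  let b : Module.Basis (Fin d) ℂ U := Module.finBasisOfFinrankEq ℂ U hU
  let A : Matrix (Fin n) (Fin d) ℂ := of fun x k => (b k : Fin n → ℂ) x
  have hspan : LinearMap.range A.mulVecLin = U := by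
    rw [range_mulVecLin, show A.col = U.subtype ∘ b from rfl, range_comp, ← Submodule.map_span,
      b.span_eq, Submodule.map_subtype_top]
  exact ⟨⟨A, by rw [Matrix.rank, hspan, hU]⟩, Subtype.ext hspan⟩

theorem isOpenQuotientMap_colSpan : IsOpenQuotientMap (colSpan n d) :=
  ⟨surjective_colSpan, continuous_coinduced_rng, isOpenMap_colSpan⟩

end FullRankMatrices

theorem nonempty_gr_of_le {d n : ℕ} (h : d ≤ n) : Nonempty (Gr d n) := by
  have hli := (linearIndependent_cols_iff_isUnit.2
    (isUnit_one (M := Matrix (Fin n) (Fin n) ℂ))).comp (Fin.castLE h) (Fin.castLE_injective h)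
  exact ⟨colSpan n d ⟨(1 : Matrix (Fin n) (Fin n) ℂ).submatrix id (Fin.castLE h),
    ((rank_eq_card_iff_linearIndependent_col _).2 hli).trans (Fintype.card_fin d)⟩⟩

def DenseFamily {ι : Type} (f : ι → ℕ) (n : ℕ) : Prop :=
  ∃ x : ∀ i, Gr (f i) n, DenseRange fun M : GL (Fin n) ℂ => fun i => glAction M (x i)

section Grouping

variable {κ : Type} {s : κ → ℕ} (a : ∀ i, Fin (s i) → ℕ) (n : ℕ)

abbrev GroupedGr : Type := ∀ p : Σ i, Fin (s i), Gr (a p.1 p.2) n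

abbrev GroupedFullRankMatrices : Type := ∀ p : Σ i, Fin (s i), FullRankMatrices n (a p.1 p.2)

def groupSpan (z : GroupedGr a n) (i : κ) : Submodule ℂ (Fin n → ℂ) := ⨆ j, (z ⟨i, j⟩).1

def groupwiseDirect : Set (GroupedGr a n) :=
  {z | ∀ i, Module.finrank ℂ (groupSpan a n z i) = ∑ j, a i j}

def groupSum (z : groupwiseDirect a n) (i : κ) : Gr (∑ j, a i j) n := ⟨groupSpan a n z i, z.2 i⟩

def fineColSpan : GroupedFullRankMatrices a n → GroupedGr a n :=
  Pi.map fun p => colSpan n (a p.1 p.2)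

def groupConcat (B : GroupedFullRankMatrices a n) (i : κ) :
    Matrix (Fin n) (Fin (∑ j, a i j)) ℂ :=
  concatCols fun j => (B ⟨i, j⟩).1

theorem continuous_groupConcat (i : κ) : Continuous fun B => groupConcat a n B i :=
  continuous_concatCols.comp
    (continuous_pi fun _ => continuous_subtype_val.comp (continuous_apply _))

theorem isOpenQuotientMap_fineColSpan : IsOpenQuotientMap (fineColSpan a n) :=
  .piMap fun _ => FullRankMatrices.isOpenQuotientMap_colSpan

variable {a n}

theorem groupSpan_fineColSpan (B : GroupedFullRankMatrices a n) (i : κ) :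
    groupSpan a n (fineColSpan a n B) i =
      LinearMap.range (groupConcat a n B i).mulVecLin := by
  rw [groupConcat, range_mulVecLin_concatCols]
  rfl

theorem fineColSpan_mem_groupwiseDirect_iff (B : GroupedFullRankMatrices a n) :
    fineColSpan a n B ∈ groupwiseDirect a n ↔
      ∀ i, (groupConcat a n B i).rank = ∑ j, a i j := by
  refine forall_congr' fun i => ?_
  rw [groupSpan_fineColSpan, Matrix.rank]

theorem groupSpan_glAction (M : GL (Fin n) ℂ) (z : GroupedGr a n) (i : κ) :
    groupSpan a n (fun p => glAction M (z p)) i =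
      (groupSpan a n z i).map (glEquiv M).toLinearMap := by
  simp only [groupSpan, Submodule.map_iSup]
  rfl

theorem glAction_mem_groupwiseDirect_iff (M : GL (Fin n) ℂ) (z : GroupedGr a n) :
    (fun p => glAction M (z p)) ∈ groupwiseDirect a n ↔ z ∈ groupwiseDirect a n := by
  refine forall_congr' fun i => ?_
  rw [groupSpan_glAction, LinearEquiv.finrank_map_eq]

theorem groupSum_glAction (M : GL (Fin n) ℂ) (z : groupwiseDirect a n) :
    groupSum a n ⟨fun p => glAction M (z.1 p), (glAction_mem_groupwiseDirect_iff M z.1).2 z.2⟩ =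
      fun i => glAction M (groupSum a n z i) :=
  funext fun i => Subtype.ext (groupSpan_glAction M z.1 i)

variable (a n)

theorem isOpen_groupwiseDirect [Finite κ] : IsOpen (groupwiseDirect a n) := by
  rw [← (isOpenQuotientMap_fineColSpan a n).isQuotientMap.isOpen_preimage]
  have : fineColSpan a n ⁻¹' groupwiseDirect a n =
      ⋂ i, (fun B => groupConcat a n B i) ⁻¹'
        {C | C.rank = Fintype.card (Fin (∑ j, a i j))} := by
    ext B
    simp [fineColSpan_mem_groupwiseDirect_iff]
  rw [this]
  exact isOpen_iInter_of_finite fun i =>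
    isOpen_setOf_rank_eq_card.preimage (continuous_groupConcat a n i)

theorem continuous_groupSum : Continuous (groupSum a n) := by
  have hquot :=
    ((isOpenQuotientMap_fineColSpan a n).restrictPreimage (groupwiseDirect a n)).isQuotientMap
  refine hquot.continuous_iff.2 ?_
  have : groupSum a n ∘ (groupwiseDirect a n).restrictPreimage (fineColSpan a n) =
      fun (B : fineColSpan a n ⁻¹' groupwiseDirect a n) i => colSpan n _
        ⟨groupConcat a n B.1 i, (fineColSpan_mem_groupwiseDirect_iff B.1).1 B.2 i⟩ :=
    funext fun B => funext fun i => Subtype.ext <| by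
      change groupSpan a n (fineColSpan a n B.1) i = _
      exact groupSpan_fineColSpan B.1 i
  rw [this]
  exact continuous_pi fun i => FullRankMatrices.isOpenQuotientMap_colSpan.continuous.comp
    (((continuous_groupConcat a n i).comp continuous_subtype_val).subtype_mk _)

theorem surjective_groupSum : Surjective (groupSum a n) := by
  intro v
  choose C hC using fun i => FullRankMatrices.surjective_colSpan (v i)
  let B : GroupedFullRankMatrices a n :=
    fun p => ⟨colBlock (C p.1).1 p.2, rank_colBlock (C p.1).2 p.2⟩
  have hB : ∀ i, groupConcat a n B i = (C i).1 := fun i => concatCols_colBlock (C i).1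
  refine ⟨⟨fineColSpan a n B, (fineColSpan_mem_groupwiseDirect_iff B).2 fun i => ?_⟩, ?_⟩
  · rw [hB]
    exact (C i).2
  · funext i
    refine Subtype.ext ?_
    change groupSpan a n (fineColSpan a n B) i = (v i).1
    rw [groupSpan_fineColSpan, hB, ← hC]
    rfl

theorem DenseFamily.coarsen [Finite κ] (hgroup : ∀ i, ∑ j, a i j ≤ n)
    (h : DenseFamily (fun p : Σ i, Fin (s i) => a p.1 p.2) n) :
    DenseFamily (fun i => ∑ j, a i j) n := by
  have := fun i => nonempty_gr_of_le (hgroup i)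
  obtain ⟨x, hx⟩ := h
  exact exists_denseRange_of_surjective_of_isOpen (isOpen_groupwiseDirect a n)
    glAction_mem_groupwiseDirect_iff _ (continuous_groupSum a n) (surjective_groupSum a n)
    groupSum_glAction hx

end Grouping

section Reindexing

variable {n : ℕ}

theorem denseDV_iff_denseFamily (l : List ℕ) : DenseDV l n ↔ DenseFamily l.get n := Iff.rfl

theorem DenseFamily.comp_equiv {ι ι' : Type} {f : ι → ℕ} (h : DenseFamily f n) (e : ι' ≃ ι) :
    DenseFamily (f ∘ e) n := by
  obtain ⟨x, hx⟩ := h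
  let Φ := (Homeomorph.piCongrLeft (Y := fun i => Gr (f i) n) e).symm
  exact ⟨Φ x, Φ.surjective.denseRange.comp hx Φ.continuous⟩

theorem DenseFamily.of_equiv {ι ι' : Type} {f : ι → ℕ} {f' : ι' → ℕ} (h : DenseFamily f n)
    (e : ι' ≃ ι) (hf : ∀ i, f' i = f (e i)) : DenseFamily f' n := by
  obtain rfl : f' = f ∘ e := funext hf
  exact h.comp_equiv e

theorem DenseFamily.denseDV_ofFn {m : ℕ} {f : Fin m → ℕ} (h : DenseFamily f n) :
    DenseDV (List.ofFn f) n :=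
  h.of_equiv (finCongr List.length_ofFn) fun _ => List.get_ofFn ..

theorem DenseDV.denseFamily_sigma {r : ℕ} {s : Fin r → ℕ} {a : ∀ i, Fin (s i) → ℕ}
    (h : DenseDV (List.ofFn fun i => List.ofFn (a i)).flatten n) :
    DenseFamily (fun p : Σ i, Fin (s i) => a p.1 p.2) n := by
  let L := (List.finRange r).sigma fun i => List.finRange (s i)
  have hflat : (List.ofFn fun i => List.ofFn (a i)).flatten = L.map fun p => a p.1 p.2 := by
    simp [L, List.ofFn_eq_map, List.sigma, List.flatMap, List.map_flatten, Function.comp_def]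
  let e : Fin L.length ≃ Σ i, Fin (s i) := List.Nodup.getEquivOfForallMemList L
    ((List.nodup_finRange r).sigma fun i => List.nodup_finRange _)
    fun p => List.mem_sigma.2 ⟨List.mem_finRange _, List.mem_finRange _⟩
  rw [hflat, denseDV_iff_denseFamily] at h
  refine h.of_equiv (e.symm.trans (finCongr (List.length_map _).symm)) fun p => ?_
  rw [Equiv.trans_apply, finCongr_apply, List.get_eq_getElem, List.getElem_map]
  exact congrArg (fun q : Σ i, Fin (s i) => a q.1 q.2) (e.apply_symm_apply p).symm

end Reindexing

theorem sparse_of_grouped_sparse_general (n r : ℕ) (s : Fin r → ℕ)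
    (a : ∀ i : Fin r, Fin (s i) → ℕ)
    (hgroup : ∀ i, ∑ j, a i j ≤ n)
    (hsparse : ¬ DenseDV (List.ofFn fun i => ∑ j, a i j) n) :
    ¬ DenseDV ((List.ofFn fun i => List.ofFn (a i)).flatten) n :=
  fun hdense => hsparse (hdense.denseFamily_sigma.coarsen a n hgroup).denseDV_ofFn

/-- grouping entries. If the vector of group sums is sparse, so is
the original vector. -/
theorem sparse_of_grouped_sparse (n r : ℕ) (s : Fin r → ℕ) (hs : ∀ i, 0 < s i)
    (a : ∀ i : Fin r, Fin (s i) → ℕ)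
    (hgroup : ∀ i, ∑ j, a i j ≤ n)
    (hsparse : ¬ DenseDV (List.ofFn fun i => ∑ j, a i j) n) :
    ¬ DenseDV ((List.ofFn fun i => List.ofFn (a i)).flatten) n :=
  sparse_of_grouped_sparse_general n r s a hgroup hsparse
end

section
/- If 𝐝 = (d_1, …, d_k; n) is a dimension vector with Σ_{i=1}^k d_i ≤ n+1, then 𝐝 is dense. -/
/-
Any `n` of `n + 1` vectors of `ℂⁿ` in general position form a basis in which the remaining vector
has only nonzero coordinates, so two such configurations differ by a linear automorphism followed
by rescaling each vector. Since `∑ dᵢ ≤ n + 1`, the spans of disjoint blocks of sizes `dᵢ` of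
configurations in general position therefore form a single `GL(n, ℂ)`-orbit. This orbit is dense:
general position is the nonvanishing of a product of determinants, hence a dense condition, every
tuple of subspaces is spanned by the blocks of some configuration, and the span map is continuous.
-/

open Set Submodule Module Polynomial Topology
open scoped Matrix

section GeneralPosition

variable (K : Type*) {V : Type*} [Field K] [AddCommGroup V] [Module K V] {n : ℕ}

def InGeneralPosition (w : Fin (n + 1) → V) : Prop :=
  ∀ s : Set (Fin (n + 1)), s ≠ univ → LinearIndepOn K w s

variable {K}

namespace InGeneralPosition

variable {v w : Fin (n + 1) → V}

theorem linearIndependent_comp (hw : InGeneralPosition K w) {ι : Type*} [Fintype ι]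
    {g : ι → Fin (n + 1)} (hg : Function.Injective g) (hι : Fintype.card ι ≤ n) :
    LinearIndependent K (w ∘ g) := by
  refine (linearIndepOn_range_iff hg w).1 (hw _ fun h => ?_)
  have := Fintype.card_le_of_surjective g (range_eq_univ.1 h)
  simp only [Fintype.card_fin] at this
  omega

theorem repr_last_ne_zero (hw : InGeneralPosition K w) (b : Basis (Fin n) K V)
    (hb : ⇑b = w ∘ Fin.castSucc) (l : Fin n) : b.repr (w (Fin.last n)) l ≠ 0 := by
  intro h
  have hspan : w (Fin.last n) ∈ span K (w '' (Fin.castSucc '' {l}ᶜ)) := by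
    rw [← image_comp, ← hb, b.mem_span_image]
    intro l' hl'
    rw [mem_compl_singleton_iff]
    rintro rfl
    exact Finsupp.mem_support_iff.1 hl' h
  have hlast : Fin.last n ∉ Fin.castSucc '' {l}ᶜ := by simp [Fin.castSucc_ne_last]
  refine ((linearIndepOn_insert hlast).1 (hw _ fun huniv => ?_)).2 hspan
  have : l.castSucc ∈ insert (Fin.last n) (Fin.castSucc '' {l}ᶜ) := huniv ▸ mem_univ _
  simp [Fin.castSucc_ne_last] at this

theorem exists_linearEquiv_apply_eq_smul [FiniteDimensional K V] (hV : finrank K V = n)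
    (hv : InGeneralPosition K v) (hw : InGeneralPosition K w) :
    ∃ (e : V ≃ₗ[K] V) (c : Fin (n + 1) → K), (∀ j, c j ≠ 0) ∧ ∀ j, e (v j) = c j • w j := by
  have hcard : Fintype.card (Fin n) = finrank K V := by simp [hV]
  let bv := basisOfLinearIndependentOfCardEqFinrank' _
    (hv.linearIndependent_comp (Fin.castSucc_injective n) (by simp)) hcard
  let bw := basisOfLinearIndependentOfCardEqFinrank' _
    (hw.linearIndependent_comp (Fin.castSucc_injective n) (by simp)) hcard
  have hbv : ⇑bv = v ∘ Fin.castSucc := coe_basisOfLinearIndependentOfCardEqFinrank' ..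
  have hbw : ⇑bw = w ∘ Fin.castSucc := coe_basisOfLinearIndependentOfCardEqFinrank' ..
  set cv := bv.repr (v (Fin.last n))
  set cw := bw.repr (w (Fin.last n))
  have hcv : ∀ l, cv l ≠ 0 := hv.repr_last_ne_zero bv hbv
  have hcw : ∀ l, cw l ≠ 0 := hw.repr_last_ne_zero bw hbw
  have hr : ∀ l, IsUnit (cw l / cv l) := fun l => (div_ne_zero (hcw l) (hcv l)).isUnit
  -- rescaling `bw` by `cw / cv` makes `e` send the last vector of `v` to that of `w`
  let e := bv.equiv (bw.isUnitSMul hr) (Equiv.refl _)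
  have he : ∀ l, e (bv l) = (cw l / cv l) • bw l := fun l => by
    rw [Basis.equiv_apply, Equiv.refl_apply, Basis.isUnitSMul_apply]
  refine ⟨e, Fin.lastCases 1 fun l => cw l / cv l, fun j => ?_, fun j => ?_⟩
  · induction j using Fin.lastCases with
    | last => simp
    | cast l => simpa using (hr l).ne_zero
  · induction j using Fin.lastCases with
    | cast l => simpa [hbv, hbw] using he l
    | last =>
      calc e (v (Fin.last n)) = ∑ l, cv l • e (bv l) := by
            rw [← bv.sum_repr (v (Fin.last n)), map_sum]
            simp only [map_smul, cv]
        _ = ∑ l, cw l • bw l := by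
            simp only [he, smul_smul, mul_div_cancel₀ _ (hcv _)]
        _ = _ := by simp [bw.sum_repr, cw]

theorem exists_linearEquiv_map_span_eq [FiniteDimensional K V] (hV : finrank K V = n)
    (hv : InGeneralPosition K v) (hw : InGeneralPosition K w) :
    ∃ e : V ≃ₗ[K] V, ∀ s : Set (Fin (n + 1)),
      (span K (v '' s)).map (e : V →ₗ[K] V) = span K (w '' s) := by
  obtain ⟨e, c, hc, he⟩ := exists_linearEquiv_apply_eq_smul hV hv hw
  refine ⟨e, fun s => ?_⟩
  rw [map_span, image_image]
  refine le_antisymm (span_le.2 ?_) (span_le.2 ?_) <;> rintro _ ⟨j, hj, rfl⟩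
  · change e (v j) ∈ _
    rw [he, SetLike.mem_coe, smul_mem_iff _ (hc j)]
    exact subset_span (mem_image_of_mem w hj)
  · rw [SetLike.mem_coe, ← smul_mem_iff _ (hc j), ← he]
    exact subset_span ⟨j, hj, rfl⟩

end InGeneralPosition

theorem inGeneralPosition_of_det_ne_zero {w : Fin (n + 1) → Fin n → K}
    (h : ∀ j : Fin (n + 1), (Matrix.of (w ∘ j.succAbove)).det ≠ 0) : InGeneralPosition K w := by
  intro s hs
  obtain ⟨j, hj⟩ := (ne_univ_iff_exists_notMem s).1 hs
  have hli : LinearIndependent K (w ∘ j.succAbove) :=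
    Matrix.linearIndependent_rows_iff_isUnit.2 (Matrix.isUnit_iff_isUnit_det _ |>.2 (h j).isUnit)
  refine ((linearIndepOn_range_iff Fin.succAbove_right_injective w).2 hli).mono ?_
  rwa [Fin.range_succAbove, subset_compl_singleton_iff]

theorem det_pow_succAbove_ne_zero [CharZero K] (j : Fin (n + 1)) :
    (Matrix.of fun (l a : Fin n) => ((j.succAbove l : ℕ) : K) ^ (a : ℕ)).det ≠ 0 := by
  refine Matrix.det_vandermonde_ne_zero_iff.2 fun l l' hll' => ?_
  exact Fin.succAbove_right_injective (Fin.ext (by exact_mod_cast hll'))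

end GeneralPosition

section Density

variable {𝕜 : Type*} [NontriviallyNormedField 𝕜] [CompleteSpace 𝕜]

theorem mem_closure_of_eval_ne_zero {Y : Type*} [TopologicalSpace Y] {γ : 𝕜 → Y}
    (hγ : Continuous γ) {p : 𝕜[X]} (hp : p ≠ 0) {s : Set Y}
    (hs : ∀ t, p.eval t ≠ 0 → γ t ∈ s) (t₀ : 𝕜) : γ t₀ ∈ closure s := by
  have hdense : Dense {t | p.IsRoot t}ᶜ :=
    (finite_setOfPred_isRoot hp).countable.dense_compl 𝕜
  exact closure_mono (image_subset_iff.2 hs) (hγ.range_subset_closure_image_dense hdense ⟨t₀, rfl⟩)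

-- On the segment from `w₀` to the Vandermonde configuration the determinants are polynomial in
-- the parameter, and their product does not vanish at the far end.
theorem dense_setOf_inGeneralPosition [CharZero 𝕜] {n : ℕ} :
    Dense {w : Fin (n + 1) → Fin n → 𝕜 | InGeneralPosition 𝕜 w} := by
  intro w₀
  let u : Fin (n + 1) → Fin n → 𝕜 := fun j a => ((j : ℕ) : 𝕜) ^ (a : ℕ)
  let γ : 𝕜 → Fin (n + 1) → Fin n → 𝕜 := fun t => w₀ + t • (u - w₀)
  let p : 𝕜[X] := ∏ j : Fin (n + 1), (Matrix.of fun l a =>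
    C (w₀ (j.succAbove l) a) + X * C ((u - w₀) (j.succAbove l) a)).det
  have heval : ∀ t, p.eval t = ∏ j : Fin (n + 1), (Matrix.of (γ t ∘ j.succAbove)).det := fun t => by
    simp only [p, eval_prod, ← coe_evalRingHom, RingHom.map_det]
    congr! with j
    ext l a
    simp [γ]
  have hp : p ≠ 0 := fun h0 => by
    have := heval 1
    simp only [h0, eval_zero, γ, one_smul, add_sub_cancel] at this
    exact Finset.prod_ne_zero_iff.2 (fun j _ => det_pow_succAbove_ne_zero j) this.symm
  have hγ : Continuous γ := by fun_prop
  simpa only [γ, zero_smul, add_zero] using mem_closure_of_eval_ne_zero hγ hp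
    (s := {w | InGeneralPosition 𝕜 w}) (fun t ht => inGeneralPosition_of_det_ne_zero
      (Finset.prod_ne_zero_iff.1 (heval t ▸ ht) · (Finset.mem_univ _))) 0

end Density

theorem Dense.image_preimage_of_isInducing {P Q Z : Type*} [TopologicalSpace P]
    [TopologicalSpace Q] [TopologicalSpace Z] {ι : P → Q} (hι : IsInducing ι) {Φ : P → Z}
    (hΦ : Continuous Φ) (hΦd : DenseRange Φ) {D : Set Q} (hD : Dense D) (hDι : D ⊆ range ι) :
    Dense (Φ '' (ι ⁻¹' D)) :=
  hΦd.dense_image hΦ <| hι.dense_iff.2 fun x => by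
    rw [image_preimage_eq_of_subset hDι]
    exact hD (ι x)

section Grassmannian

theorem coe_colSpan {n d : ℕ} (A : FullRankMatrices n d) :
    (colSpan n d A).1 = span ℂ (range A.1.col) :=
  Matrix.range_mulVecLin _

theorem colSpan_surjective (n d : ℕ) : Function.Surjective (colSpan n d) := by
  intro U
  let b := finBasisOfFinrankEq ℂ U.1 U.2
  let A : Matrix (Fin n) (Fin d) ℂ := (Matrix.of fun l => (b l : Fin n → ℂ))ᵀ
  have hA : span ℂ (range A.col) = U.1 := by
    change span ℂ (range (U.1.subtype ∘ b)) = U.1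
    rw [range_comp, span_image, b.span_eq, map_subtype_top]
  refine ⟨⟨A, ?_⟩, Subtype.ext ?_⟩
  · rw [Matrix.rank_eq_finrank_span_cols, hA, U.2]
  · exact (coe_colSpan _).trans hA

theorem exists_glEquiv_eq {n : ℕ} (e : (Fin n → ℂ) ≃ₗ[ℂ] (Fin n → ℂ)) :
    ∃ M : GL (Fin n) ℂ, glEquiv M = e :=
  ⟨Matrix.GeneralLinearGroup.toLin.symm
    ((LinearMap.GeneralLinearGroup.generalLinearEquiv ℂ _).symm e), by simp [glEquiv]⟩

end Grassmannian

section Blocks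

variable {n k : ℕ} {d : Fin k → ℕ} (hsum : ∑ i, d i ≤ n + 1)

def blockIndex : (Σ i, Fin (d i)) → Fin (n + 1) :=
  Fin.castLE hsum ∘ finSigmaFinEquiv

theorem blockIndex_injective : Function.Injective (blockIndex hsum) :=
  (Fin.castLE_injective hsum).comp finSigmaFinEquiv.injective

def blockMatrices {R : Type*} (w : Fin (n + 1) → Fin n → R) (i : Fin k) :
    Matrix (Fin n) (Fin (d i)) R :=
  (Matrix.of fun l => w (blockIndex hsum ⟨i, l⟩))ᵀ

theorem col_blockMatrices {R : Type*} (w : Fin (n + 1) → Fin n → R) (i : Fin k) :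
    (blockMatrices hsum w i).col = w ∘ blockIndex hsum ∘ Sigma.mk i :=
  rfl

theorem continuous_blockMatrices {R : Type*} [TopologicalSpace R] :
    Continuous (blockMatrices (R := R) hsum) := by
  unfold blockMatrices
  fun_prop

theorem blockMatrices_surjective {R : Type*} [Zero R] :
    Function.Surjective (blockMatrices (R := R) hsum) := fun A =>
  ⟨Function.extend (blockIndex hsum) (fun q a => A q.1 a q.2) 0, funext fun i => by
    ext a l
    exact congrFun ((blockIndex_injective hsum).extend_apply (fun q a => A q.1 a q.2) 0 ⟨i, l⟩) a⟩

theorem rank_blockMatrices {K : Type*} [Field K] (hd : ∀ i, d i ≤ n)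
    {w : Fin (n + 1) → Fin n → K} (hw : InGeneralPosition K w) (i : Fin k) :
    (blockMatrices hsum w i).rank = d i := by
  rw [Matrix.rank_eq_finrank_span_cols, col_blockMatrices, finrank_span_eq_card, Fintype.card_fin]
  exact hw.linearIndependent_comp ((blockIndex_injective hsum).comp sigma_mk_injective)
    (by simpa using hd i)

theorem exists_glAction_colSpan_eq {v w : Fin (n + 1) → Fin n → ℂ}
    (hv : InGeneralPosition ℂ v) (hw : InGeneralPosition ℂ w)
    {A B : ∀ i, FullRankMatrices n (d i)} (hA : ∀ i, (A i).1 = blockMatrices hsum v i)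
    (hB : ∀ i, (B i).1 = blockMatrices hsum w i) :
    ∃ M : GL (Fin n) ℂ, ∀ i, glAction M (colSpan n (d i) (A i)) = colSpan n (d i) (B i) := by
  obtain ⟨e, he⟩ := hv.exists_linearEquiv_map_span_eq (finrank_fin_fun ℂ) hw
  obtain ⟨M, rfl⟩ := exists_glEquiv_eq e
  refine ⟨M, fun i => Subtype.ext ?_⟩
  change (colSpan n (d i) (A i)).1.map _ = (colSpan n (d i) (B i)).1
  rw [coe_colSpan, coe_colSpan, hA, hB, col_blockMatrices, col_blockMatrices, range_comp v,
    range_comp w]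
  exact he _

end Blocks

theorem exists_dense_glOrbit {n k : ℕ} (d : Fin k → ℕ) (hd : ∀ i, d i ≤ n)
    (hsum : ∑ i, d i ≤ n + 1) :
    ∃ x : ∀ i, Gr (d i) n, Dense {y | ∃ M : GL (Fin n) ℂ, (fun i => glAction M (x i)) = y} := by
  let ι : (∀ i, FullRankMatrices n (d i)) → ∀ i, Matrix (Fin n) (Fin (d i)) ℂ :=
    Pi.map fun _ => Subtype.val
  let Φ : (∀ i, FullRankMatrices n (d i)) → ∀ i, Gr (d i) n := Pi.map fun i => colSpan n (d i)
  let D : Set (∀ i, Matrix (Fin n) (Fin (d i)) ℂ) :=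
    blockMatrices hsum '' {w : Fin (n + 1) → Fin n → ℂ | InGeneralPosition ℂ w}
  have hDι : D ⊆ range ι := by
    rintro _ ⟨w, hw, rfl⟩
    exact ⟨fun i => ⟨_, rank_blockMatrices hsum hd hw i⟩, rfl⟩
  have hD : Dense D := (blockMatrices_surjective hsum).denseRange.dense_image
    (continuous_blockMatrices hsum) dense_setOf_inGeneralPosition
  obtain ⟨w₀, hw₀⟩ := dense_setOf_inGeneralPosition.nonempty (X := Fin (n + 1) → Fin n → ℂ)
  let A₀ : ∀ i, FullRankMatrices n (d i) := fun i => ⟨_, rank_blockMatrices hsum hd hw₀ i⟩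
  refine ⟨Φ A₀, ?_⟩
  refine (hD.image_preimage_of_isInducing (.piMap fun _ => .subtypeVal)
    (continuous_pi fun i => continuous_coinduced_rng.comp (continuous_apply i))
    (Function.Surjective.piMap fun i => colSpan_surjective n (d i)).denseRange hDι).mono ?_
  rintro _ ⟨A, ⟨w, hw, hwA⟩, rfl⟩
  obtain ⟨M, hM⟩ := exists_glAction_colSpan_eq hsum hw₀ hw (A := A₀) (fun _ => rfl)
    (fun i => (congrFun hwA i).symm)
  exact ⟨M, funext hM⟩

theorem dense_of_sum_le_succ_general (n k : ℕ) (d : Fin k → ℕ)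
    (hd : ∀ i, d i ≤ n)
    (hsum : ∑ i, d i ≤ n + 1) :
    DenseDV (List.ofFn d) n :=
  exists_dense_glOrbit _ (fun i => by simpa using hd _) <| by
    rwa [← List.sum_ofFn, List.ofFn_get, List.sum_ofFn]

/-- a dimension vector with total dimension at most `n + 1` is dense. -/
theorem dense_of_sum_le_succ (n k : ℕ) (hn : 1 ≤ n) (d : Fin k → ℕ)
    (hd : ∀ i, d i ≤ n)
    (hsum : ∑ i, d i ≤ n + 1) :
    DenseDV (List.ofFn d) n :=
  dense_of_sum_le_succ_general n k d hd hsum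
end
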